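/- Let (X,G) be a minimal topological dynamical system (G countably infinite discrete amenable) and m ∈ ℕ. Then (X,G) is either frequently m-stable (every point is a frequent m-stability point, equivalently for all ε>0 there is δ>0 with uBD({g : diam_m(gA) < ε}) > 0 whenever diam(A) < δ) or strongly m-spreading (∃ ε>0 with uBD({g : diam_m(gU) < ε}) = 0 for all nonempty open U). -/

import Mathlib

open Filter Metric Set Pointwise MulAction
open scoped Classical

noncomputable def folnerAvg {G : Type*} (F : ℕ → Finset G) (φ : G → ℝ) (n : ℕ) : ℝ :=
  (∑ g ∈ F n, φ g) / (F n).card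

/-- A Følner sequence: nonempty finite sets with `|F_n △ K F_n| / |F_n| → 0`. -/
def IsFolner {G : Type*} [Group G] (F : ℕ → Finset G) : Prop :=
  (∀ n, (F n).Nonempty) ∧
  ∀ K : Finset G, K.Nonempty →
    Tendsto (fun n =>
      ((symmDiff (F n) (Finset.image₂ (· * ·) K (F n))).card : ℝ) / (F n).card)
      atTop (nhds 0)

/-- Upper Banach density: sup over Følner sequences of the upper density. -/
noncomputable def uBD {G : Type*} [Group G] (S : Set G) : ℝ :=
  sSup {a | ∃ F : ℕ → Finset G, IsFolner F ∧
    a = limsup (folnerAvg F (S.indicator fun _ => (1 : ℝ))) atTop}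

/-- Lower Banach density: inf over Følner sequences of the lower density. -/
noncomputable def lBD {G : Type*} [Group G] (S : Set G) : ℝ :=
  sInf {a | ∃ F : ℕ → Finset G, IsFolner F ∧
    a = liminf (folnerAvg F (S.indicator fun _ => (1 : ℝ))) atTop}

/-- `sup_F limsup_n (1/|F_n|) Σ_{g ∈ F_n} φ(g)`. -/
noncomputable def supFolnerLimsup {G : Type*} [Group G] (φ : G → ℝ) : ℝ :=
  sSup {a | ∃ F : ℕ → Finset G, IsFolner F ∧ a = limsup (folnerAvg F φ) atTop}

/-- Minimal pairwise distance of an `m`-tuple. -/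
noncomputable def minDist {X : Type*} [MetricSpace X] (m : ℕ) (x : Fin m → X) : ℝ :=
  sInf {r | ∃ i j : Fin m, i < j ∧ r = dist (x i) (x j)}

/-- `diam_m(A)`: sup over `m`-tuples in `A` of the minimal pairwise distance. -/
noncomputable def diamm {X : Type*} [MetricSpace X] (m : ℕ) (A : Set X) : ℝ :=
  sSup {r | ∃ x : Fin m → X, (∀ i, x i ∈ A) ∧ r = minDist m x}

section AuxDiamm

variable {X : Type*} [MetricSpace X]

lemma minDist_nonneg (m : ℕ) (x : Fin m → X) : 0 ≤ minDist m x :=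
  Real.sInf_nonneg (by rintro r ⟨i, j, _, rfl⟩; exact dist_nonneg)

lemma diamm_nonneg (m : ℕ) (A : Set X) : 0 ≤ diamm m A :=
  Real.sSup_nonneg (by rintro r ⟨x, hx, rfl⟩; exact minDist_nonneg m x)

lemma minDist_le_diam [CompactSpace X] (m : ℕ) (x : Fin m → X) :
    minDist m x ≤ Metric.diam (univ : Set X) := by
  by_cases h : ∃ i j : Fin m, i < j
  · obtain ⟨i, j, hij⟩ := h
    refine csInf_le_of_le ⟨0, ?_⟩ ⟨i, j, hij, rfl⟩
      (Metric.dist_le_diam_of_mem isCompact_univ.isBounded trivial trivial)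
    rintro r ⟨i', j', _, rfl⟩; exact dist_nonneg
  · have he : {r | ∃ i j : Fin m, i < j ∧ r = dist (x i) (x j)} = ∅ := by
      refine eq_empty_of_forall_notMem ?_
      rintro r ⟨i, j, hij, _⟩; exact h ⟨i, j, hij⟩
    rw [minDist, he, Real.sInf_empty]
    exact Metric.diam_nonneg

lemma bddAbove_diammSet [CompactSpace X] (m : ℕ) (A : Set X) :
    BddAbove {r | ∃ x : Fin m → X, (∀ i, x i ∈ A) ∧ r = minDist m x} :=
  ⟨Metric.diam (univ : Set X), by rintro r ⟨x, hx, rfl⟩; exact minDist_le_diam m x⟩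

lemma diamm_mono [CompactSpace X] (m : ℕ) {A B : Set X} (h : A ⊆ B) :
    diamm m A ≤ diamm m B := by
  refine Real.sSup_le ?_ (diamm_nonneg m B)
  rintro r ⟨x, hx, rfl⟩
  exact le_csSup (bddAbove_diammSet m B) ⟨x, fun i => h (hx i), rfl⟩

lemma diamm_empty (m : ℕ) : diamm m (∅ : Set X) = 0 := by
  refine le_antisymm (Real.sSup_le ?_ le_rfl) (diamm_nonneg m ∅)
  rintro r ⟨x, hx, rfl⟩
  cases m with
  | zero =>
    have he : {r | ∃ i j : Fin 0, i < j ∧ r = dist (x i) (x j)} = ∅ :=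
      eq_empty_of_forall_notMem (by rintro r ⟨i, j, _, _⟩; exact i.elim0)
    rw [minDist, he, Real.sInf_empty]
  | succ n => exact absurd (hx 0) (notMem_empty _)

end AuxDiamm

section AuxUBD

variable {G : Type*} [Group G]

lemma folnerAvg_ind_nonneg (F : ℕ → Finset G) (S : Set G) (n : ℕ) :
    0 ≤ folnerAvg F (S.indicator fun _ => (1 : ℝ)) n :=
  div_nonneg (Finset.sum_nonneg fun g _ =>
    Set.indicator_nonneg (fun _ _ => zero_le_one) g) (Nat.cast_nonneg _)

lemma folnerAvg_ind_le_one (F : ℕ → Finset G) (hF : ∀ n, (F n).Nonempty)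
    (S : Set G) (n : ℕ) :
    folnerAvg F (S.indicator fun _ => (1 : ℝ)) n ≤ 1 := by
  rw [folnerAvg, div_le_one (by exact_mod_cast (hF n).card_pos)]
  calc ∑ g ∈ F n, S.indicator (fun _ => (1 : ℝ)) g
      ≤ ∑ _g ∈ F n, (1 : ℝ) := by
        refine Finset.sum_le_sum fun g _ => ?_
        exact Set.indicator_apply_le' (fun _ => le_rfl) (fun _ => zero_le_one)
    _ = (F n).card := by simp

lemma limsup_ind_bddBelow (F : ℕ → Finset G) (S : Set G) :
    IsBoundedUnder (· ≥ ·) atTop (folnerAvg F (S.indicator fun _ => (1 : ℝ))) :=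
  isBoundedUnder_of ⟨0, fun n => folnerAvg_ind_nonneg F S n⟩

lemma limsup_ind_bddAbove (F : ℕ → Finset G) (hF : ∀ n, (F n).Nonempty) (S : Set G) :
    IsBoundedUnder (· ≤ ·) atTop (folnerAvg F (S.indicator fun _ => (1 : ℝ))) :=
  isBoundedUnder_of ⟨1, fun n => folnerAvg_ind_le_one F hF S n⟩

lemma limsup_ind_nonneg (F : ℕ → Finset G) (hF : ∀ n, (F n).Nonempty) (S : Set G) :
    0 ≤ limsup (folnerAvg F (S.indicator fun _ => (1 : ℝ))) atTop :=
  le_limsup_of_frequently_le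
    (Frequently.of_forall fun n => folnerAvg_ind_nonneg F S n)
    (limsup_ind_bddAbove F hF S)

lemma limsup_ind_le_one (F : ℕ → Finset G) (hF : ∀ n, (F n).Nonempty) (S : Set G) :
    limsup (folnerAvg F (S.indicator fun _ => (1 : ℝ))) atTop ≤ 1 :=
  limsup_le_of_le ((limsup_ind_bddBelow F S).isCoboundedUnder_le)
    (Eventually.of_forall fun n => folnerAvg_ind_le_one F hF S n)

lemma uBD_bddAbove (S : Set G) :
    BddAbove {a | ∃ F : ℕ → Finset G, IsFolner F ∧
      a = limsup (folnerAvg F (S.indicator fun _ => (1 : ℝ))) atTop} := by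
  refine ⟨1, ?_⟩
  rintro a ⟨F, hF, rfl⟩
  exact limsup_ind_le_one F hF.1 S

lemma uBD_nonneg (hG : ∃ F : ℕ → Finset G, IsFolner F) (S : Set G) : 0 ≤ uBD S := by
  obtain ⟨F, hF⟩ := hG
  refine le_trans (limsup_ind_nonneg F hF.1 S) (le_csSup (uBD_bddAbove S) ⟨F, hF, rfl⟩)

lemma uBD_mono (hG : ∃ F : ℕ → Finset G, IsFolner F) {S T : Set G} (h : S ⊆ T) :
    uBD S ≤ uBD T := by
  refine Real.sSup_le ?_ (uBD_nonneg hG T)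
  rintro a ⟨F, hF, rfl⟩
  refine le_trans ?_ (le_csSup (uBD_bddAbove T) ⟨F, hF, rfl⟩)
  refine limsup_le_limsup (Eventually.of_forall fun n => ?_)
    ((limsup_ind_bddBelow F S).isCoboundedUnder_le) (limsup_ind_bddAbove F hF.1 T)
  have hc : (0:ℝ) < (F n).card := by exact_mod_cast (hF.1 n).card_pos
  rw [folnerAvg, folnerAvg, div_le_div_iff_of_pos_right hc]
  exact Finset.sum_le_sum fun g _ =>
    Set.indicator_le_indicator_of_subset h (fun _ => zero_le_one) g

lemma uBD_univ_pos (hG : ∃ F : ℕ → Finset G, IsFolner F) : 0 < uBD (univ : Set G) := by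
  obtain ⟨F, hF⟩ := hG
  have h1 : limsup (folnerAvg F ((univ : Set G).indicator fun _ => (1 : ℝ))) atTop = 1 := by
    have : folnerAvg F ((univ : Set G).indicator fun _ => (1 : ℝ)) = fun _ => 1 := by
      funext n
      rw [folnerAvg]
      simp only [Set.indicator_univ, Finset.sum_const, nsmul_eq_mul, mul_one]
      exact div_self (by exact_mod_cast (hF.1 n).card_pos.ne')
    rw [this, limsup_const]
  have : (1 : ℝ) ≤ uBD (univ : Set G) := by
    rw [← h1]; exact le_csSup (uBD_bddAbove _) ⟨F, hF, rfl⟩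
  linarith

lemma isFolner_image_mul {F : ℕ → Finset G} (hF : IsFolner F) (h : G) :
    IsFolner (fun n => (F n).image (· * h)) := by
  constructor
  · exact fun n => (hF.1 n).image _
  · intro K
    have key : ∀ n,
        ((symmDiff ((F n).image (· * h))
          (Finset.image₂ (· * ·) K ((F n).image (· * h)))).card : ℝ)
          / ((F n).image (· * h)).card
        = ((symmDiff (F n) (Finset.image₂ (· * ·) K (F n))).card : ℝ) / (F n).card := by
      intro n
      have h2 : Finset.image₂ (· * ·) K ((F n).image (· * h))
          = (Finset.image₂ (· * ·) K (F n)).image (· * h) := by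
        rw [Finset.image₂_image_right, Finset.image_image₂]
        simp [mul_assoc]
      rw [h2, ← Finset.image_symmDiff _ _ (mul_left_injective h),
        Finset.card_image_of_injective _ (mul_left_injective h),
        Finset.card_image_of_injective _ (mul_left_injective h)]
    have := hF.2 K
    exact fun hK => (this hK).congr fun n => (key n).symm
  
lemma folnerAvg_image_mul (F : ℕ → Finset G) (S : Set G) (h : G) (n : ℕ) :
    folnerAvg (fun k => (F k).image (· * h)) (S.indicator fun _ => (1 : ℝ)) n
      = folnerAvg F ({g : G | g * h ∈ S}.indicator fun _ => (1 : ℝ)) n := by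
  rw [folnerAvg, folnerAvg,
    Finset.sum_image (fun a _ b _ hab => mul_left_injective h hab),
    Finset.card_image_of_injective _ (mul_left_injective h)]
  have : ∀ g : G, S.indicator (fun _ => (1:ℝ)) (g * h)
      = ({g : G | g * h ∈ S}).indicator (fun _ => (1:ℝ)) g := by
    intro g
    by_cases hg : g * h ∈ S
    · rw [Set.indicator_of_mem hg, Set.indicator_of_mem (by exact hg)]
    · rw [Set.indicator_of_notMem hg, Set.indicator_of_notMem (by exact hg)]
  simp only [this]

lemma uBD_mul_right (S : Set G) (h : G) : uBD {g : G | g * h ∈ S} = uBD S := by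
  rw [uBD, uBD]
  congr 1
  ext a
  constructor
  · rintro ⟨F, hF, rfl⟩
    refine ⟨fun n => (F n).image (· * h), isFolner_image_mul hF h, ?_⟩
    congr 1
    funext n
    exact (folnerAvg_image_mul F S h n).symm
  · rintro ⟨F, hF, rfl⟩
    refine ⟨fun n => (F n).image (· * h⁻¹), isFolner_image_mul hF h⁻¹, ?_⟩
    congr 1
    funext n
    rw [folnerAvg_image_mul F {g : G | g * h ∈ S} h⁻¹ n]
    congr 1
    ext g
    simp

end AuxUBD


section Dyn

variable (G : Type*) [Group G] (X : Type*) [MetricSpace X] [MulAction G X]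

/-- `FS^m_ε`: points `x` admitting `δ > 0` with
`uBD {g : diam_m(g B(x,δ)) < ε} > 0`. -/
noncomputable def FSset (m : ℕ) (ε : ℝ) : Set X :=
  {x : X | ∃ δ > 0, 0 < uBD {g : G | diamm m (g • ball x δ) < ε}}

/-- `x` is a frequent `m`-stability point. -/
def IsFreqStablePt (m : ℕ) (x : X) : Prop :=
  ∀ ε > 0, ∃ δ > 0, ∀ A : Set X, x ∈ A → Metric.diam A < δ →
    0 < uBD {g : G | diamm m (g • A) < ε}

/-- The set of frequent `m`-stability points. -/
def FreqStablePts (m : ℕ) : Set X := {x : X | IsFreqStablePt G X m x}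

/-- `(X,G)` is frequently `m`-stable. -/
def FreqStable (m : ℕ) : Prop :=
  ∀ ε > 0, ∃ δ > 0, ∀ A : Set X, Metric.diam A < δ →
    0 < uBD {g : G | diamm m (g • A) < ε}

/-- `(X,G)` is strongly `m`-spreading. -/
def StronglySpreading (m : ℕ) : Prop :=
  ∃ ε > 0, ∀ U : Set X, IsOpen U → U.Nonempty →
    uBD {g : G | diamm m (g • U) < ε} = 0

/-- `DE^m_ε`: points admitting `δ > 0` with
`sup_F limsup_n (1/|F_n|) Σ_{g∈F_n} diam_m(g B(x,δ)) < ε`. -/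
noncomputable def DEset (m : ℕ) (ε : ℝ) : Set X :=
  {x : X | ∃ δ > 0, supFolnerLimsup (fun g : G => diamm m (g • ball x δ)) < ε}

/-- The set of diam-mean `m`-equicontinuity points. -/
noncomputable def DEpts (m : ℕ) : Set X :=
  {x : X | ∀ ε > 0, ∃ δ > 0,
    supFolnerLimsup (fun g : G => diamm m (g • ball x δ)) < ε}

/-- `(X,G)` is diam-mean `m`-sensitive. -/
def DiamMeanSensitive (m : ℕ) : Prop :=
  ∃ ε > 0, ∀ U : Set X, IsOpen U → U.Nonempty →
    ε ≤ supFolnerLimsup (fun g : G => diamm m (g • U))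

/-- `(X,G)` is diam-mean `m`-equicontinuous. -/
def DiamMeanEquicont (m : ℕ) : Prop :=
  ∀ ε > 0, ∃ δ > 0, ∀ U : Set X, diamm m U < δ →
    supFolnerLimsup (fun g : G => diamm m (g • U)) < ε

/-- A weakly mean-sensitive `m`-tuple. -/
def IsWMSTuple {m : ℕ} (x : Fin m → X) : Prop :=
  ∀ U : Fin m → Set X, (∀ k, IsOpen (U k)) → (∀ k, x k ∈ U k) →
    ∃ η > 0, ∀ V : Set X, IsOpen V → V.Nonempty →
      η < uBD {g : G | ∀ k, ((g • V) ∩ U k).Nonempty}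

end Dyn

section DynLemmas

variable {G X : Type*} [Group G] [MetricSpace X] [CompactSpace X] [MulAction G X]
  [ContinuousConstSMul G X]

lemma FSset_isOpen (hG : ∃ F : ℕ → Finset G, IsFolner F) (m : ℕ) (ε : ℝ) :
    IsOpen (FSset G X m ε) := by
  rw [Metric.isOpen_iff]
  rintro x ⟨δ, hδ, hpos⟩
  refine ⟨δ / 2, by linarith, fun y hy => ?_⟩
  have hyx : dist y x < δ / 2 := mem_ball.mp hy
  refine ⟨δ - dist y x, by linarith, ?_⟩
  have hsub : ball y (δ - dist y x) ⊆ ball x δ :=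
    ball_subset_ball' (by linarith)
  refine lt_of_lt_of_le hpos (uBD_mono hG fun g hg => ?_)
  exact lt_of_le_of_lt (diamm_mono m (smul_set_mono hsub)) hg

lemma FSset_smul (hG : ∃ F : ℕ → Finset G, IsFolner F) (m : ℕ) (ε : ℝ) (h : G)
    {x : X} (hx : x ∈ FSset G X m ε) : h • x ∈ FSset G X m ε := by
  obtain ⟨δ, hδ, hpos⟩ := hx
  have hopen : IsOpen (h • ball x δ) := isOpen_ball.smul h
  have hmem : h • x ∈ h • ball x δ := smul_mem_smul_set (mem_ball_self hδ)
  obtain ⟨δ', hδ', hsub⟩ := Metric.isOpen_iff.mp hopen _ hmem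
  refine ⟨δ', hδ', ?_⟩
  set S := {g : G | diamm m (g • ball x δ) < ε} with hS
  have hsub2 : {g : G | g * h ∈ S} ⊆ {g : G | diamm m (g • ball (h • x) δ') < ε} := by
    intro g hg
    have hss : g • ball (h • x) δ' ⊆ (g * h) • ball x δ := by
      refine subset_trans (smul_set_mono hsub) ?_
      rw [smul_smul]
    exact lt_of_le_of_lt (diamm_mono m hss) hg
  calc (0:ℝ) < uBD S := hpos
    _ = uBD {g : G | g * h ∈ S} := (uBD_mul_right S h).symm
    _ ≤ _ := uBD_mono hG hsub2

lemma FSset_empty_or_univ (hG : ∃ F : ℕ → Finset G, IsFolner F)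
    (hmin : ∀ x : X, Dense (MulAction.orbit G x : Set X)) (m : ℕ) (ε : ℝ) :
    FSset G X m ε = ∅ ∨ FSset G X m ε = univ := by
  rcases eq_empty_or_nonempty (FSset G X m ε)ᶜ with hc | ⟨x, hx⟩
  · right
    rw [← compl_empty_iff, hc]
  · left
    have horb : (MulAction.orbit G x : Set X) ⊆ (FSset G X m ε)ᶜ := by
      rintro _ ⟨g, rfl⟩ hmem
      refine hx ?_
      have := FSset_smul hG m ε g⁻¹ hmem
      rwa [inv_smul_smul] at this
    have hclosed : IsClosed (FSset G X m ε)ᶜ := (FSset_isOpen hG m ε).isClosed_compl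
    have : (univ : Set X) ⊆ (FSset G X m ε)ᶜ := by
      rw [← (hmin x).closure_eq]
      exact hclosed.closure_subset_iff.mpr horb
    have hcu : (FSset G X m ε)ᶜ = univ := le_antisymm (subset_univ _) this
    rw [← compl_compl (FSset G X m ε), hcu, compl_univ]

end DynLemmas


/-- Auslander–Yorke dichotomy for frequent stability, minimal
case: `(X,G)` is either frequently `m`-stable or strongly `m`-spreading. -/
theorem auslander_yorke_freq_stability_minimal {G X : Type*} [Group G]
    [Countable G] [Infinite G] [MetricSpace X] [CompactSpace X] [MulAction G X]
    [ContinuousConstSMul G X]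
    (hG : ∃ F : ℕ → Finset G, IsFolner F)
    (hmin : ∀ x : X, Dense (MulAction.orbit G x : Set X)) (m : ℕ) :
    FreqStable G X m ∨ StronglySpreading G X m := by
  have hempty : ∀ (A : Set X), A = ∅ → ∀ ε : ℝ, 0 < ε →
      0 < uBD {g : G | diamm m (g • A) < ε} := by
    rintro A rfl ε hε
    have hset : {g : G | diamm m (g • (∅ : Set X)) < ε} = univ :=
      eq_univ_of_forall fun g => by
        simp only [mem_setOf_eq, smul_set_empty, diamm_empty]; exact hε
    rw [hset]
    exact uBD_univ_pos hG
  by_cases hall : ∀ ε : ℝ, 0 < ε → FSset G X m ε = univ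
  · left
    intro ε hε
    by_cases hX : Nonempty X
    · have hx : ∀ x : X, ∃ δ > 0, 0 < uBD {g : G | diamm m (g • ball x δ) < ε} :=
        fun x => by
          have : x ∈ FSset G X m ε := (hall ε hε).symm ▸ mem_univ x
          exact this
      choose δf hδf hpos using hx
      obtain ⟨t, ht⟩ := isCompact_univ.elim_finite_subcover
        (fun x : X => ball x (δf x / 2)) (fun x => isOpen_ball)
        (fun y _ => mem_iUnion.2 ⟨y, mem_ball_self (half_pos (hδf y))⟩)
      obtain ⟨x0⟩ := hX
      have htne : t.Nonempty := by
        obtain ⟨x, hxt, _⟩ := mem_iUnion₂.mp (ht (mem_univ x0))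
        exact ⟨x, hxt⟩
      refine ⟨t.inf' htne fun x => δf x / 2, ?_, ?_⟩
      · rw [gt_iff_lt, Finset.lt_inf'_iff]
        exact fun x _ => half_pos (hδf x)
      · intro A hA
        rcases eq_empty_or_nonempty A with rfl | ⟨a, ha⟩
        · exact hempty ∅ rfl ε hε
        · obtain ⟨x, hxt, hax⟩ := mem_iUnion₂.mp (ht (mem_univ a))
          have hax' : dist a x < δf x / 2 := mem_ball.mp hax
          have hAb : Bornology.IsBounded A :=
            isCompact_univ.isBounded.subset (subset_univ A)
          have hinf : t.inf' htne (fun x => δf x / 2) ≤ δf x / 2 :=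
            Finset.inf'_le _ hxt
          have hsub : A ⊆ ball x (δf x) := by
            intro y hy
            have h1 : dist y a ≤ Metric.diam A := dist_le_diam_of_mem hAb hy ha
            have : dist y x ≤ dist y a + dist a x := dist_triangle y a x
            rw [mem_ball]
            have h2 : Metric.diam A < δf x / 2 := lt_of_lt_of_le hA hinf
            linarith
          refine lt_of_lt_of_le (hpos x) (uBD_mono hG fun g hg => ?_)
          exact lt_of_le_of_lt (diamm_mono m (smul_set_mono hsub)) hg
    · refine ⟨1, one_pos, fun A _ => ?_⟩
      have : A = ∅ := by
        rw [not_nonempty_iff] at hX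
        exact A.eq_empty_of_isEmpty
      exact hempty A this ε hε
  · right
    push_neg at hall
    obtain ⟨ε, hε, hne⟩ := hall
    have hemptyset : FSset G X m ε = ∅ :=
      (FSset_empty_or_univ hG hmin m ε).resolve_right hne
    refine ⟨ε, hε, fun U hU ⟨x, hxU⟩ => ?_⟩
    obtain ⟨δ, hδ, hsub⟩ := Metric.isOpen_iff.mp hU x hxU
    have hx : x ∉ FSset G X m ε := by rw [hemptyset]; exact notMem_empty x
    have hnpos : ¬ 0 < uBD {g : G | diamm m (g • ball x δ) < ε} :=
      fun hp => hx ⟨δ, hδ, hp⟩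
    refine le_antisymm ?_ (uBD_nonneg hG _)
    refine le_trans (uBD_mono hG fun g hg => ?_) (not_lt.mp hnpos)
    exact lt_of_le_of_lt (diamm_mono m (smul_set_mono hsub)) hg
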